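/- Let X₁,…,X_T be i.i.d. real random variables with score W satisfying E[W(X)] = 0, f a bounded observable, f̄_T = (1/T) Σ_{t=1}^T f(X_t) the ergodic average, and W_T = Σ_{t=1}^T W(X_t). Then Var[f̄_T · W_T] = T (E[f(X)])² E[W(X)²] + O(1) as T → ∞. -/

import Mathlib

/-!
Put `a = E f(X)` and `g = f - a`, so that `f̄_T W_T = a W_T + Y_T` with
`Y_T = T⁻¹ (∑ g(X_t)) W_T`. Then
`Var(f̄_T W_T) = a² Var W_T + 2a Cov(W_T, Y_T) + Var Y_T`, where `Var W_T = T E[W²]`,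
`Cov(W_T, Y_T) = T⁻¹ E[(∑ g(X_t)) W_T²]` and `Var Y_T ≤ T⁻² E[(∑ g(X_t))² W_T²]`.
Expanding these moments over index tuples, every tuple in which some index occurs only once
contributes zero, since its centred factor is independent of the others. Only `T` triples and
at most `3 T²` quadruples survive, so both remaining terms are bounded.
-/

open MeasureTheory ProbabilityTheory Finset
open Fintype (piFinset mem_piFinset)

abbrev EachValueRepeats {ι : Type*} {n : ℕ} (I : Fin n → ι) : Prop := ∀ k, ∃ m ≠ k, I m = I k

lemma card_filter_eachValueRepeats_three_le {α : Type*} [DecidableEq α] (s : Finset α) :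
    #{I ∈ piFinset fun _ : Fin 3 => s | EachValueRepeats I} ≤ #s := by
  refine (card_le_card fun I hI => ?_).trans
    (card_image_le (s := s) (f := fun a (_ : Fin 3) => a))
  simp only [mem_filter, mem_piFinset, Fin.forall_fin_succ, Fin.exists_fin_succ,
    IsEmpty.forall_iff, IsEmpty.exists_iff] at hI
  refine mem_image.2 ⟨I 0, hI.1.1, funext fun m => ?_⟩
  fin_cases m <;> grind

lemma card_filter_eachValueRepeats_four_le {α : Type*} [DecidableEq α] (s : Finset α) :
    #{I ∈ piFinset fun _ : Fin 4 => s | EachValueRepeats I} ≤ 3 * #s ^ 2 := by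
  -- the entries of such a 4-tuple pair up in one of three ways
  have hsub : {I ∈ piFinset fun _ : Fin 4 => s | EachValueRepeats I} ⊆
      ((s ×ˢ s).image fun p => ![p.1, p.1, p.2, p.2]) ∪
        ((s ×ˢ s).image fun p => ![p.1, p.2, p.1, p.2]) ∪
        ((s ×ˢ s).image fun p => ![p.1, p.2, p.2, p.1]) := by
    intro I hI
    simp only [mem_filter, mem_piFinset, Fin.forall_fin_succ, Fin.exists_fin_succ,
      IsEmpty.forall_iff, IsEmpty.exists_iff] at hI
    simp only [mem_union, mem_image, mem_product, funext_iff, Fin.forall_fin_succ,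
      IsEmpty.forall_iff, Prod.exists, Matrix.cons_val_zero, Matrix.cons_val_succ, and_true]
    grind
  calc _ ≤ _ := card_le_card hsub
    _ ≤ #(s ×ˢ s) + #(s ×ˢ s) + #(s ×ˢ s) :=
      (card_union_le _ _).trans <| add_le_add ((card_union_le _ _).trans <|
        add_le_add card_image_le card_image_le) card_image_le
    _ = 3 * #s ^ 2 := by rw [card_product]; ring

section

variable {Ω β ι : Type*} [MeasurableSpace Ω] [MeasurableSpace β] {μ : Measure Ω}
  {X : ι → Ω → β} {n : ℕ} {Φ : Fin n → β → ℝ}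

lemma integral_prod_comp_eq_zero_of_forall_ne [DecidableEq ι] (hX : ∀ i, Measurable (X i))
    (hindep : iIndepFun X μ) (hΦ : ∀ m, Measurable (Φ m)) {I : Fin n → ι} {k : Fin n}
    (hk : ∀ m ≠ k, I m ≠ I k) (hk0 : ∫ ω, Φ k (X (I k) ω) ∂μ = 0) :
    ∫ ω, ∏ m, Φ m (X (I m) ω) ∂μ = 0 := by
  have hdisj : Disjoint {I k} ((univ.erase k).image I) := by
    simpa using fun m hm h => hk m hm h
  have hind := (hindep.indepFun_finset _ _ hdisj hX).comp
    (φ := fun p => Φ k (p ⟨I k, mem_singleton_self _⟩))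
    (ψ := fun q => ∏ m ∈ (univ.erase k).attach, Φ m (q ⟨I m, mem_image_of_mem I m.2⟩))
    (by fun_prop) (by fun_prop)
  have hfactor := hind.integral_fun_mul_eq_mul_integral
    (Measurable.aestronglyMeasurable (by fun_prop))
    (Measurable.aestronglyMeasurable (by fun_prop))
  have hattach ω : ∏ m ∈ (univ.erase k).attach, Φ m (X (I m) ω) =
      ∏ m ∈ univ.erase k, Φ m (X (I m) ω) :=
    prod_attach _ fun m => Φ m (X (I m) ω)
  simp only [Function.comp_apply, hattach] at hfactor
  simp_rw [← mul_prod_erase univ _ (mem_univ k)]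
  rw [hfactor, hk0, zero_mul]

variable [IsProbabilityMeasure μ]

lemma abs_integral_prod_sum_comp_le [DecidableEq ι] (hX : ∀ i, Measurable (X i))
    (hindep : iIndepFun X μ) (hΦ : ∀ m, Measurable (Φ m)) {C : Fin n → ℝ}
    (hC : ∀ m x, |Φ m x| ≤ C m) (h0 : ∀ m i, ∫ ω, Φ m (X i ω) ∂μ = 0) (s : Finset ι) :
    |∫ ω, ∏ m, ∑ i ∈ s, Φ m (X i ω) ∂μ| ≤
      #{I ∈ piFinset fun _ : Fin n => s | EachValueRepeats I} * ∏ m, C m := by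
  have hbound (I : Fin n → ι) ω : ‖∏ m, Φ m (X (I m) ω)‖ ≤ ∏ m, C m := by
    rw [Real.norm_eq_abs, abs_prod]
    exact prod_le_prod (fun _ _ => abs_nonneg _) fun m _ => hC m _
  have hmeas (I : Fin n → ι) : Measurable fun ω => ∏ m, Φ m (X (I m) ω) :=
    Finset.measurable_prod _ fun m _ => (hΦ m).comp (hX _)
  simp_rw [prod_univ_sum]
  rw [integral_finsetSum _ fun I _ =>
    Integrable.of_bound (hmeas I).aestronglyMeasurable _ (ae_of_all _ (hbound I))]
  calc _ ≤ ∑ I ∈ piFinset (fun _ => s), |∫ ω, ∏ m, Φ m (X (I m) ω) ∂μ| :=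
        abs_sum_le_sum_abs _ _
    _ ≤ ∑ I ∈ piFinset (fun _ => s), if EachValueRepeats I then ∏ m, C m else 0 := by
      refine sum_le_sum fun I _ => ?_
      split_ifs with hI
      · simpa using norm_integral_le_of_norm_le_const (μ := μ) (ae_of_all _ (hbound I))
      · obtain ⟨k, hk⟩ := not_forall.1 hI
        push Not at hk
        rw [integral_prod_comp_eq_zero_of_forall_ne hX hindep hΦ hk (h0 k (I k)), abs_zero]
    _ = _ := by rw [sum_ite, sum_const_zero, add_zero, sum_const, nsmul_eq_mul]

lemma abs_integral_sum_mul_sum_sq_le [DecidableEq ι] [Nonempty β]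
    (hX : ∀ i, Measurable (X i)) (hindep : iIndepFun X μ) {φ ψ : β → ℝ} (hφ : Measurable φ)
    (hψ : Measurable ψ) {A B : ℝ} (hA : ∀ x, |φ x| ≤ A) (hB : ∀ x, |ψ x| ≤ B)
    (hφ0 : ∀ i, ∫ ω, φ (X i ω) ∂μ = 0) (hψ0 : ∀ i, ∫ ω, ψ (X i ω) ∂μ = 0) (s : Finset ι) :
    |∫ ω, (∑ i ∈ s, φ (X i ω)) * (∑ i ∈ s, ψ (X i ω)) ^ 2 ∂μ| ≤ #s * (A * B ^ 2) := by
  have hA0 : 0 ≤ A := (abs_nonneg _).trans (hA (Classical.arbitrary _))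
  calc _ = |∫ ω, ∏ m, ∑ i ∈ s, ![φ, ψ, ψ] m (X i ω) ∂μ| := by
        simp [Fin.prod_univ_three, sq, mul_assoc]
    _ ≤ #{I ∈ piFinset fun _ : Fin 3 => s | EachValueRepeats I} * ∏ m, ![A, B, B] m :=
        abs_integral_prod_sum_comp_le hX hindep (by simp [Fin.forall_fin_succ, hφ, hψ])
          (by simp [Fin.forall_fin_succ, hA, hB]) (by simp [Fin.forall_fin_succ, hφ0, hψ0]) s
    _ = #{I ∈ piFinset fun _ : Fin 3 => s | EachValueRepeats I} * (A * B ^ 2) := by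
        simp [Fin.prod_univ_three, sq, mul_assoc]
    _ ≤ #s * (A * B ^ 2) := mul_le_mul_of_nonneg_right
        (mod_cast card_filter_eachValueRepeats_three_le s) (mul_nonneg hA0 (sq_nonneg B))

lemma integral_sq_sum_mul_sq_sum_le [DecidableEq ι] (hX : ∀ i, Measurable (X i))
    (hindep : iIndepFun X μ) {φ ψ : β → ℝ} (hφ : Measurable φ) (hψ : Measurable ψ) {A B : ℝ}
    (hA : ∀ x, |φ x| ≤ A) (hB : ∀ x, |ψ x| ≤ B) (hφ0 : ∀ i, ∫ ω, φ (X i ω) ∂μ = 0)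
    (hψ0 : ∀ i, ∫ ω, ψ (X i ω) ∂μ = 0) (s : Finset ι) :
    ∫ ω, (∑ i ∈ s, φ (X i ω)) ^ 2 * (∑ i ∈ s, ψ (X i ω)) ^ 2 ∂μ ≤
      3 * #s ^ 2 * (A ^ 2 * B ^ 2) := by
  calc _ ≤ |∫ ω, (∑ i ∈ s, φ (X i ω)) ^ 2 * (∑ i ∈ s, ψ (X i ω)) ^ 2 ∂μ| :=
        le_abs_self _
    _ = |∫ ω, ∏ m, ∑ i ∈ s, ![φ, φ, ψ, ψ] m (X i ω) ∂μ| := by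
        simp [Fin.prod_univ_four, sq, mul_assoc]
    _ ≤ #{I ∈ piFinset fun _ : Fin 4 => s | EachValueRepeats I} * ∏ m, ![A, A, B, B] m :=
        abs_integral_prod_sum_comp_le hX hindep (by simp [Fin.forall_fin_succ, hφ, hψ])
          (by simp [Fin.forall_fin_succ, hA, hB]) (by simp [Fin.forall_fin_succ, hφ0, hψ0]) s
    _ = #{I ∈ piFinset fun _ : Fin 4 => s | EachValueRepeats I} * (A ^ 2 * B ^ 2) := by
        simp [Fin.prod_univ_four, sq, mul_assoc]
    _ ≤ 3 * #s ^ 2 * (A ^ 2 * B ^ 2) := mul_le_mul_of_nonneg_right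
        (mod_cast card_filter_eachValueRepeats_four_le s) (by positivity)

lemma memLp_comp_of_abs_le {φ : β → ℝ} (hφ : Measurable φ) {Y : Ω → β} (hY : Measurable Y)
    {C : ℝ} (hC : ∀ x, |φ x| ≤ C) (p : ENNReal) : MemLp (fun ω => φ (Y ω)) p μ :=
  .of_bound (hφ.comp hY).aestronglyMeasurable C (ae_of_all _ fun _ => hC _)

lemma abs_variance_const_mul_add_sub_le {S Y : Ω → ℝ} (hS : MemLp S 2 μ) (hY : MemLp Y 2 μ)
    (hS0 : ∫ ω, S ω ∂μ = 0) (a : ℝ) :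
    |Var[fun ω => a * S ω + Y ω; μ] - a ^ 2 * Var[S; μ]| ≤
      2 * |a| * |∫ ω, S ω * Y ω ∂μ| + ∫ ω, Y ω ^ 2 ∂μ := by
  rw [variance_fun_add (hS.const_mul a) hY, variance_const_mul, covariance_const_mul_left,
    covariance_eq_sub hS hY, hS0, zero_mul, sub_zero]
  have hVarY := variance_le_expectation_sq (μ := μ) hY.aestronglyMeasurable
  calc _ = |2 * a * ∫ ω, S ω * Y ω ∂μ + Var[Y; μ]| := by simp only [Pi.mul_apply]; ring_nf
    _ ≤ |2 * a * ∫ ω, S ω * Y ω ∂μ| + |Var[Y; μ]| := abs_add_le _ _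
    _ ≤ _ := by
      rw [abs_mul, abs_mul, abs_two, abs_of_nonneg (variance_nonneg _ _)]
      exact add_le_add le_rfl hVarY

lemma variance_sum_comp_eq_card_mul (hX : ∀ i, Measurable (X i)) (hindep : iIndepFun X μ)
    {i₀ : ι} (hid : ∀ i, IdentDistrib (X i) (X i₀) μ μ) {ψ : β → ℝ} (hψ : Measurable ψ)
    {B : ℝ} (hB : ∀ x, |ψ x| ≤ B) (s : Finset ι) :
    Var[fun ω => ∑ i ∈ s, ψ (X i ω); μ] = #s * Var[fun ω => ψ (X i₀ ω); μ] := by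
  have hsum := IndepFun.variance_sum (μ := μ) (X := fun i ω => ψ (X i ω)) (s := s)
    (fun i _ => memLp_comp_of_abs_le hψ (hX i) hB 2)
    (fun i _ j _ hij => (hindep.indepFun hij).comp hψ hψ)
  have hvar i : Var[fun ω => ψ (X i ω); μ] = Var[fun ω => ψ (X i₀ ω); μ] :=
    ((hid i).comp hψ).variance_eq
  rw [Finset.sum_fn] at hsum
  rw [hsum, sum_congr rfl fun i _ => hvar i, sum_const, nsmul_eq_mul]

lemma abs_variance_add_inv_card_mul_sum_mul_sum_sub_le [DecidableEq ι] [Nonempty β]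
    (hX : ∀ i, Measurable (X i)) (hindep : iIndepFun X μ) {φ ψ : β → ℝ} (hφ : Measurable φ)
    (hψ : Measurable ψ) {A B : ℝ} (hA : ∀ x, |φ x| ≤ A) (hB : ∀ x, |ψ x| ≤ B)
    (hφ0 : ∀ i, ∫ ω, φ (X i ω) ∂μ = 0) (hψ0 : ∀ i, ∫ ω, ψ (X i ω) ∂μ = 0) (a : ℝ)
    (s : Finset ι) :
    |Var[fun ω => (a + (#s : ℝ)⁻¹ * ∑ i ∈ s, φ (X i ω)) * ∑ i ∈ s, ψ (X i ω); μ] -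
        a ^ 2 * Var[fun ω => ∑ i ∈ s, ψ (X i ω); μ]| ≤
      2 * |a| * (A * B ^ 2) + 3 * (A ^ 2 * B ^ 2) := by
  set S := fun ω => ∑ i ∈ s, ψ (X i ω)
  set G := fun ω => ∑ i ∈ s, φ (X i ω)
  set Y := fun ω => (#s : ℝ)⁻¹ * (G ω * S ω)
  have hS : MemLp S 2 μ := memLp_finsetSum _ fun i _ => memLp_comp_of_abs_le hψ (hX i) hB 2
  have hY : MemLp Y 2 μ :=
    (hS.mul' (memLp_finsetSum _ fun i _ => memLp_comp_of_abs_le hφ (hX i) hA ⊤)).const_mul _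
  have hS0 : ∫ ω, S ω ∂μ = 0 := by
    rw [integral_finsetSum _ fun i _ =>
      (memLp_comp_of_abs_le hψ (hX i) hB 1).integrable le_rfl]
    simp [hψ0]
  have hA0 : 0 ≤ A := (abs_nonneg _).trans (hA (Classical.arbitrary _))
  have hcard : (#s : ℝ)⁻¹ * #s ≤ 1 := inv_mul_le_one_of_le₀ le_rfl (Nat.cast_nonneg _)
  have hSY : |∫ ω, S ω * Y ω ∂μ| ≤ A * B ^ 2 := by
    have heq : ∫ ω, S ω * Y ω ∂μ = (#s : ℝ)⁻¹ * ∫ ω, G ω * S ω ^ 2 ∂μ := by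
      rw [← integral_const_mul]
      congr 1 with ω
      ring
    rw [heq, abs_mul, abs_of_nonneg (by positivity)]
    calc _ ≤ (#s : ℝ)⁻¹ * (#s * (A * B ^ 2)) := by
          gcongr
          exact abs_integral_sum_mul_sum_sq_le hX hindep hφ hψ hA hB hφ0 hψ0 s
      _ ≤ A * B ^ 2 := by
          rw [← mul_assoc]
          exact mul_le_of_le_one_left (by positivity) hcard
  have hY2 : ∫ ω, Y ω ^ 2 ∂μ ≤ 3 * (A ^ 2 * B ^ 2) := by
    have heq : ∫ ω, Y ω ^ 2 ∂μ = ((#s : ℝ)⁻¹) ^ 2 * ∫ ω, G ω ^ 2 * S ω ^ 2 ∂μ := by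
      rw [← integral_const_mul]
      congr 1 with ω
      ring
    rw [heq]
    calc _ ≤ ((#s : ℝ)⁻¹) ^ 2 * (3 * #s ^ 2 * (A ^ 2 * B ^ 2)) := by
          gcongr
          exact integral_sq_sum_mul_sq_sum_le hX hindep hφ hψ hA hB hφ0 hψ0 s
      _ = ((#s : ℝ)⁻¹ * #s) ^ 2 * (3 * (A ^ 2 * B ^ 2)) := by ring
      _ ≤ 3 * (A ^ 2 * B ^ 2) := mul_le_of_le_one_left (by positivity)
          (pow_le_one₀ (by positivity) hcard)
  calc _ = |Var[fun ω => a * S ω + Y ω; μ] - a ^ 2 * Var[S; μ]| := by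
        congr 3 with ω
        ring
    _ ≤ 2 * |a| * |∫ ω, S ω * Y ω ∂μ| + ∫ ω, Y ω ^ 2 ∂μ :=
        abs_variance_const_mul_add_sub_le hS hY hS0 a
    _ ≤ _ := by gcongr

end

/-- For i.i.d. samples with mean-zero score `W` and bounded `f`, the ergodic
average `f̄_T = T⁻¹ Σ f(X_t)` and total score `W_T = Σ W(X_t)` satisfy
`Var[f̄_T · W_T] = T (E[f])² E[W²] + O(1)` uniformly in `T ≥ 1`. -/
theorem variance_uncentered_ergodic_LR_estimator_linear_growth
    {Ω : Type*} [MeasureSpace Ω] [IsProbabilityMeasure (ℙ : Measure Ω)]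
    (X : ℕ → Ω → ℝ) (hXmeas : ∀ t, Measurable (X t))
    (hindep : iIndepFun X ℙ)
    (hid : ∀ t, IdentDistrib (X t) (X 0) ℙ ℙ)
    (f W : ℝ → ℝ) (hf : Measurable f) (hW : Measurable W)
    (Cf CW : ℝ) (hfbdd : ∀ x, |f x| ≤ Cf) (hWbdd : ∀ x, |W x| ≤ CW)
    (hW0 : ∫ ω, W (X 0 ω) = 0) :
    ∃ C : ℝ, ∀ T : ℕ, 1 ≤ T →
      |variance (fun ω =>
          ((T : ℝ)⁻¹ * ∑ t ∈ Finset.range T, f (X t ω)) * ∑ t ∈ Finset.range T, W (X t ω)) ℙ -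
        (T : ℝ) * ((∫ ω, f (X 0 ω)) ^ 2 * ∫ ω, (W (X 0 ω)) ^ 2)| ≤ C := by
  set a := ∫ ω, f (X 0 ω)
  have hmean {φ : ℝ → ℝ} (hφ : Measurable φ) t : ∫ ω, φ (X t ω) = ∫ ω, φ (X 0 ω) :=
    ((hid t).comp hφ).integral_eq
  have ha : |a| ≤ Cf := by
    simpa using norm_integral_le_of_norm_le_const (μ := ℙ) (f := fun ω => f (X 0 ω))
      (ae_of_all _ fun ω => hfbdd (X 0 ω))
  have hcentred_bdd x : |f x - a| ≤ 2 * Cf := (abs_sub _ _).trans (by linarith [hfbdd x])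
  have hcentred t : ∫ ω, f (X t ω) - a = 0 := by
    rw [integral_sub ((memLp_comp_of_abs_le hf (hXmeas t) hfbdd 1).integrable le_rfl)
      (integrable_const a), hmean hf t]
    simp [a]
  refine ⟨2 * Cf * (2 * Cf * CW ^ 2) + 3 * ((2 * Cf) ^ 2 * CW ^ 2), fun T hT => ?_⟩
  have key := abs_variance_add_inv_card_mul_sum_mul_sum_sub_le (φ := fun x => f x - a)
    hXmeas hindep (hf.sub measurable_const) hW hcentred_bdd hWbdd hcentred
    (fun t => (hmean hW t).trans hW0) a (range T)
  have hVar : Var[fun ω => ∑ t ∈ range T, W (X t ω); ℙ] = T * ∫ ω, W (X 0 ω) ^ 2 := by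
    rw [variance_sum_comp_eq_card_mul hXmeas hindep hid hW hWbdd, card_range,
      variance_eq_sub (memLp_comp_of_abs_le hW (hXmeas 0) hWbdd 2), hW0]
    simp
  have hT0 : (T : ℝ) ≠ 0 := by positivity
  have hdecomp : (fun ω => (a + (T : ℝ)⁻¹ * ∑ t ∈ range T, (f (X t ω) - a)) *
      ∑ t ∈ range T, W (X t ω)) =
      fun ω => ((T : ℝ)⁻¹ * ∑ t ∈ range T, f (X t ω)) * ∑ t ∈ range T, W (X t ω) := by
    funext ω
    simp only [sum_sub_distrib, sum_const, card_range, nsmul_eq_mul]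
    field_simp
    ring
  rw [card_range, hdecomp, hVar] at key
  rw [mul_left_comm (T : ℝ)]
  refine key.trans ?_
  gcongr
  exact mul_nonneg (by linarith [(abs_nonneg a).trans ha]) (sq_nonneg CW)
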